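/- arXiv:2411.04753 — 2 statements merged into one kernel-verified Lean document; each statement's English description precedes it below -/
import Mathlib

section
/- Water-filling optimality: the solution to minimizing Σᵢ₌₁^{τ} d_i/(d_i xᵢ + c) over xᵢ ≥ 0 subject to Σᵢ xᵢ ≤ P (with d_i > 0 fixed and c > 0) is xᵢ = max(0, 1/√μ − c/d_i), where μ > 0 is chosen so that Σᵢ max(0, 1/√μ − c/d_i) = P. -/
open scoped BigOperators

lemma convex_tangent_ineq (d c x y : ℝ) (hd : 0 < d) (hc : 0 < c) (hx : 0 ≤ x) (hy : 0 ≤ y) :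
    d / (d * y + c) ≤ d / (d * x + c) + d ^ 2 / (d * y + c) ^ 2 * (x - y) := by
  have hdx : 0 < d * x + c := by positivity
  have hdy : 0 < d * y + c := by positivity
  have key : d / (d * x + c) + d ^ 2 / (d * y + c) ^ 2 * (x - y) - d / (d * y + c)
      = d ^ 3 * (x - y) ^ 2 / ((d * y + c) ^ 2 * (d * x + c)) := by
    field_simp
    ring
  have hpos : 0 ≤ d ^ 3 * (x - y) ^ 2 / ((d * y + c) ^ 2 * (d * x + c)) := by positivity
  linarith [key ▸ hpos]

theorem stmt15 {τ : ℕ} (d : Fin τ → ℝ) (hd : ∀ i, 0 < d i) (hant : Antitone d)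
    (c P μ : ℝ) (hc : 0 < c) (hP : 0 < P) (hμ : 0 < μ)
    (hsum : ∑ i, max 0 (1 / Real.sqrt μ - c / d i) = P) :
    (∀ i, 0 ≤ max 0 (1 / Real.sqrt μ - c / d i)) ∧
    (∑ i, max 0 (1 / Real.sqrt μ - c / d i)) ≤ P ∧
    ∀ x : Fin τ → ℝ, (∀ i, 0 ≤ x i) → (∑ i, x i) ≤ P →
      ∑ i, d i / (d i * max 0 (1 / Real.sqrt μ - c / d i) + c)
        ≤ ∑ i, d i / (d i * x i + c) := by
  have hs : 0 < Real.sqrt μ := Real.sqrt_pos.mpr hμ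
  have hsq : Real.sqrt μ ^ 2 = μ := Real.sq_sqrt hμ.le
  set y : Fin τ → ℝ := fun i => max 0 (1 / Real.sqrt μ - c / d i) with hydef
  have hy : ∀ i, 0 ≤ y i := fun i => le_max_left _ _
  set s : Fin τ → ℝ := fun i => d i ^ 2 / (d i * y i + c) ^ 2 with hsdef
  have hdenom : ∀ i, 0 < d i * y i + c := fun i => by
    have := hd i; have := hy i; positivity
  have hsle : ∀ i, s i ≤ μ := by
    intro i
    rcases le_or_gt (1 / Real.sqrt μ - c / d i) 0 with h | h
    · have hy0 : y i = 0 := max_eq_left h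
      have hdi := hd i
      have h1 : d i ≤ c * Real.sqrt μ := by
        rw [sub_nonpos, div_le_div_iff₀ hs hdi] at h
        linarith
      have h2 : d i ^ 2 ≤ c ^ 2 * μ := by nlinarith
      have : s i = d i ^ 2 / c ^ 2 := by simp [hsdef, hy0]
      rw [this, div_le_iff₀ (by positivity)]
      linarith
    · have hyv : y i = 1 / Real.sqrt μ - c / d i := max_eq_right h.le
      have hdi := hd i
      have hden : d i * y i + c = d i / Real.sqrt μ := by
        rw [hyv]; field_simp; ring
      have : s i = μ := by
        rw [hsdef]
        simp only
        rw [hden, div_pow, div_div_eq_mul_div, hsq]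
        field_simp
      linarith [this]
  have hsy : ∀ i, s i * y i = μ * y i := by
    intro i
    rcases le_or_gt (1 / Real.sqrt μ - c / d i) 0 with h | h
    · have hy0 : y i = 0 := max_eq_left h
      simp [hy0]
    · have hyv : y i = 1 / Real.sqrt μ - c / d i := max_eq_right h.le
      have hdi := hd i
      have hden : d i * y i + c = d i / Real.sqrt μ := by
        rw [hyv]; field_simp; ring
      have hsi : s i = μ := by
        rw [hsdef]
        simp only
        rw [hden, div_pow, div_div_eq_mul_div, hsq]
        field_simp
      rw [hsi]
  refine ⟨hy, le_of_eq hsum, ?_⟩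
  intro x hx hxsum
  have hpt : ∀ i ∈ Finset.univ, d i / (d i * y i + c)
      ≤ d i / (d i * x i + c) + s i * (x i - y i) := by
    intro i _
    exact convex_tangent_ineq (d i) c (x i) (y i) (hd i) hc (hx i) (hy i)
  have hsum1 : ∑ i, d i / (d i * y i + c)
      ≤ ∑ i, (d i / (d i * x i + c) + s i * (x i - y i)) :=
    Finset.sum_le_sum hpt
  have hsplit : ∑ i, (d i / (d i * x i + c) + s i * (x i - y i))
      = ∑ i, d i / (d i * x i + c) + (∑ i, s i * x i - ∑ i, s i * y i) := by
    rw [Finset.sum_add_distrib, ← Finset.sum_sub_distrib]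
    congr 1
    apply Finset.sum_congr rfl
    intro i _
    ring
  have hA : ∑ i, s i * x i ≤ μ * P := by
    calc ∑ i, s i * x i ≤ ∑ i, μ * x i :=
          Finset.sum_le_sum (fun i _ => mul_le_mul_of_nonneg_right (hsle i) (hx i))
      _ = μ * ∑ i, x i := by rw [Finset.mul_sum]
      _ ≤ μ * P := mul_le_mul_of_nonneg_left hxsum hμ.le
  have hB : ∑ i, s i * y i = μ * P := by
    calc ∑ i, s i * y i = ∑ i, μ * y i := Finset.sum_congr rfl (fun i _ => hsy i)
      _ = μ * ∑ i, y i := by rw [Finset.mul_sum]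
      _ = μ * P := by rw [hsum]
  calc ∑ i, d i / (d i * y i + c)
      ≤ ∑ i, (d i / (d i * x i + c) + s i * (x i - y i)) := hsum1
    _ = ∑ i, d i / (d i * x i + c) + (∑ i, s i * x i - ∑ i, s i * y i) := hsplit
    _ ≤ ∑ i, d i / (d i * x i + c) + (μ * P - μ * P) := by linarith
    _ = ∑ i, d i / (d i * x i + c) := by ring
end

section
/- Generalized water-filling: the minimizer of Σᵢ gᵢ/(dᵢ xᵢ + c) over xᵢ ≥ 0 with Σᵢ xᵢ ≤ P (gᵢ, dᵢ > 0, c > 0) satisfies, via KKT conditions, xᵢ = max(0, √(gᵢ)/(√(dᵢ)·√μ) − c/dᵢ) for a Lagrange multiplier μ > 0 with Σᵢ max(0, √(gᵢ)/(√(dᵢ)·√μ) − c/dᵢ) = P. -/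
open scoped BigOperators

lemma waterfill_key (g d c μ x : ℝ) (hg : 0 < g) (hd : 0 < d) (hc : 0 < c)
    (hμ : 0 < μ) (hx : 0 ≤ x) :
    g / (d * max 0 (Real.sqrt g / (Real.sqrt d * Real.sqrt μ) - c / d) + c)
      + μ * max 0 (Real.sqrt g / (Real.sqrt d * Real.sqrt μ) - c / d)
    ≤ g / (d * x + c) + μ * x := by
  have hsg : Real.sqrt g * Real.sqrt g = g := Real.mul_self_sqrt hg.le
  have hsd : Real.sqrt d * Real.sqrt d = d := Real.mul_self_sqrt hd.le
  have hsμ : Real.sqrt μ * Real.sqrt μ = μ := Real.mul_self_sqrt hμ.le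
  have hsgp : 0 < Real.sqrt g := Real.sqrt_pos.mpr hg
  have hsdp : 0 < Real.sqrt d := Real.sqrt_pos.mpr hd
  have hsμp : 0 < Real.sqrt μ := Real.sqrt_pos.mpr hμ
  have ht : 0 < d * x + c := by positivity
  set a := Real.sqrt g / (Real.sqrt d * Real.sqrt μ) - c / d with ha
  rcases le_or_gt a 0 with h0 | h0
  · rw [max_eq_left h0]
    have h1 : Real.sqrt g / (Real.sqrt d * Real.sqrt μ) ≤ c / d := by
      simpa [ha] using h0
    have h2 : Real.sqrt g * d ≤ c * (Real.sqrt d * Real.sqrt μ) := by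
      rw [div_le_div_iff₀ (by positivity) hd] at h1
      linarith
    have h4 : (Real.sqrt g * d) * (Real.sqrt g * d) = g * d * d := by
      linear_combination (d * d) * hsg
    have h5 : (c * (Real.sqrt d * Real.sqrt μ)) * (c * (Real.sqrt d * Real.sqrt μ))
        = μ * c ^ 2 * d := by
      linear_combination (c ^ 2 * (Real.sqrt μ * Real.sqrt μ)) * hsd + (c ^ 2 * d) * hsμ
    have h6 : g * d * d ≤ μ * c ^ 2 * d := by
      rw [← h4, ← h5]
      exact mul_le_mul h2 h2 (by positivity) (by positivity)
    have hgd : g * d ≤ μ * c ^ 2 := le_of_mul_le_mul_right h6 hd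
    have hrw : g / c - g / (d * x + c) = g * d * x / (c * (d * x + c)) := by
      field_simp; ring
    have hle : g * d * x / (c * (d * x + c)) ≤ μ * x := by
      rw [div_le_iff₀ (by positivity)]
      nlinarith [mul_nonneg (mul_nonneg hμ.le hd.le) (mul_nonneg hx hx),
        mul_nonneg hx (mul_nonneg hc.le hμ.le)]
    simp only [mul_zero, zero_add, add_zero]
    linarith
  · rw [max_eq_right h0.le]
    have hsval : d * a + c = d * Real.sqrt g / (Real.sqrt d * Real.sqrt μ) := by
      rw [ha]; field_simp; ring
    have hsp : 0 < d * a + c := by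
      have := mul_pos hd h0; linarith
    set s := d * a + c with hsdef
    have hμs : μ * s ^ 2 = g * d := by
      rw [hsval, div_pow, mul_pow, mul_pow, Real.sq_sqrt hg.le, Real.sq_sqrt hd.le,
        Real.sq_sqrt hμ.le]
      field_simp
    have ht' : d * x + c = s + d * (x - a) := by rw [hsdef]; ring
    have e3 : μ * (x - a) * (s * (d * x + c)) - g * d * (x - a) = μ * s * d * (x - a) ^ 2 := by
      rw [ht']
      linear_combination (x - a) * hμs
    have e1 : g / s - g / (d * x + c) = g * d * (x - a) / (s * (d * x + c)) := by
      rw [div_sub_div _ _ hsp.ne' ht.ne']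
      congr 1
      rw [ht']; ring
    have e4 : g * d * (x - a) / (s * (d * x + c)) ≤ μ * (x - a) := by
      rw [div_le_iff₀ (by positivity)]
      have h7 : 0 ≤ μ * s * d * (x - a) ^ 2 := by positivity
      linarith
    linarith

theorem stmt16 {τ : ℕ} (g d : Fin τ → ℝ) (hg : ∀ i, 0 < g i) (hd : ∀ i, 0 < d i)
    (c P μ : ℝ) (hc : 0 < c) (hP : 0 < P) (hμ : 0 < μ)
    (hsum : ∑ i, max 0 (Real.sqrt (g i) / (Real.sqrt (d i) * Real.sqrt μ) - c / d i) = P) :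
    (∀ i, 0 ≤ max 0 (Real.sqrt (g i) / (Real.sqrt (d i) * Real.sqrt μ) - c / d i)) ∧
    (∑ i, max 0 (Real.sqrt (g i) / (Real.sqrt (d i) * Real.sqrt μ) - c / d i)) ≤ P ∧
    ∀ x : Fin τ → ℝ, (∀ i, 0 ≤ x i) → (∑ i, x i) ≤ P →
      ∑ i, g i / (d i * max 0 (Real.sqrt (g i) / (Real.sqrt (d i) * Real.sqrt μ) - c / d i) + c)
        ≤ ∑ i, g i / (d i * x i + c) := by
  refine ⟨fun i => le_max_left _ _, hsum.le, fun x hx hxP => ?_⟩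
  have key : ∀ i : Fin τ,
      g i / (d i * max 0 (Real.sqrt (g i) / (Real.sqrt (d i) * Real.sqrt μ) - c / d i) + c)
        + μ * max 0 (Real.sqrt (g i) / (Real.sqrt (d i) * Real.sqrt μ) - c / d i)
      ≤ g i / (d i * x i + c) + μ * x i :=
    fun i => waterfill_key (g i) (d i) c μ (x i) (hg i) (hd i) hc hμ (hx i)
  have hsum2 : ∑ i, (g i / (d i * max 0 (Real.sqrt (g i) / (Real.sqrt (d i) * Real.sqrt μ) - c / d i) + c)
        + μ * max 0 (Real.sqrt (g i) / (Real.sqrt (d i) * Real.sqrt μ) - c / d i))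
      ≤ ∑ i, (g i / (d i * x i + c) + μ * x i) :=
    Finset.sum_le_sum fun i _ => key i
  rw [Finset.sum_add_distrib, Finset.sum_add_distrib, ← Finset.mul_sum, ← Finset.mul_sum,
    hsum] at hsum2
  have hxs : μ * ∑ i, x i ≤ μ * P := mul_le_mul_of_nonneg_left hxP hμ.le
  linarith
end
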